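/- Transfer risk bound for linear distillation (n < d): the expected transfer risk of the distillation-trained student ĥ_X satisfies E_{X∼P_x^n}[R(ĥ_X)] ≤ p(β) + p(π/2 − β)^n for every β ∈ [0, π/2], where ŵ = P_X w* and R(ĥ_X) = P_{x∼P_x}[sign(w*ᵀx) ≠ sign(ŵᵀx)]. -/

import Mathlib

/-!
Statement 15 (Transfer risk bound for linear distillation, n < d): the expected transfer
risk of the distillation-trained student ĥ_X satisfies
E_{X∼P_x^n}[R(ĥ_X)] ≤ p(β) + p(π/2 − β)^n for every β ∈ [0, π/2], where
ŵ = X(XᵀX)⁻¹Xᵀw* and R(ĥ_X) = P_{x∼P_x}[sign(w*ᵀx) ≠ sign(ŵᵀx)].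
-/

open Real Matrix MeasureTheory
open scoped RealInnerProductSpace

noncomputable section

abbrev E (d : ℕ) := EuclideanSpace ℝ (Fin d)

/-- Reinterpret a plain vector as a point of Euclidean space. -/
def toE {m : ℕ} (v : Fin m → ℝ) : EuclideanSpace ℝ (Fin m) := WithLp.toLp 2 v

/-- The data matrix whose columns are the data points. -/
def Xmat {d n : ℕ} (x : Fin n → E d) : Matrix (Fin d) (Fin n) ℝ :=
  Matrix.of fun k i => x i k

/-- Unsigned angle ᾱ(u,v) = arccos(|uᵀv| / (‖u‖‖v‖)) ∈ [0, π/2]. -/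
def abar {d : ℕ} (u v : E d) : ℝ := Real.arccos (|⟪u, v⟫| / (‖u‖ * ‖v‖))

/-- p(θ) = P_{x∼P_x}[ᾱ(w*,x) ≥ θ], the reverse cdf of the angle between the teacher and
a random data point. -/
def pfun {d : ℕ} (μ : Measure (E d)) (wstar : E d) (θ : ℝ) : ℝ :=
  (μ {x | θ ≤ abar wstar x}).toReal

/-- The student's weight vector ŵ = X(XᵀX)⁻¹Xᵀw*, the projection of the teacher's weight
vector onto the span of the training data X. -/
def whatX {d n : ℕ} (wstar : E d) (X : Fin n → E d) : E d :=
  toE ((Xmat X * ((Xmat X)ᵀ * Xmat X)⁻¹ * (Xmat X)ᵀ) *ᵥ fun k => wstar k)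

/-- Transfer risk R = P_{x∼P_x}[sign(w*ᵀx) ≠ sign(ŵᵀx)]. -/
def risk {d : ℕ} (μ : Measure (E d)) (wstar what : E d) : ℝ :=
  (μ {x | (0 ≤ ⟪wstar, x⟫) ≠ (0 ≤ ⟪what, x⟫)}).toReal

set_option maxHeartbeats 1000000

section aux
variable {d n : ℕ} (wstar : E d) (x : Fin n → E d)

def Mproj {d n : ℕ} (x : Fin n → E d) : Matrix (Fin d) (Fin d) ℝ :=
  Xmat x * ((Xmat x)ᵀ * Xmat x)⁻¹ * (Xmat x)ᵀ

lemma arccos_anti {x y : ℝ} (h : x ≤ y) : Real.arccos y ≤ Real.arccos x := by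
  simp only [Real.arccos]; linarith [Real.monotone_arcsin h]

lemma key_ineq {d : ℕ} (u v x : E d) (hu : u ≠ 0) (hx : x ≠ 0)
    (hsign : ⟪u, x⟫ * ⟪v, x⟫ ≤ 0) :
    ⟪u, v⟫ / (‖u‖ * ‖v‖) ≤ Real.sqrt (1 - (|⟪u, x⟫| / (‖u‖ * ‖x‖)) ^ 2) := by
  have hxn : (0:ℝ) < ‖x‖ := norm_pos_iff.mpr hx
  have hun : (0:ℝ) < ‖u‖ := norm_pos_iff.mpr hu
  set e : E d := ‖x‖⁻¹ • x with he_def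
  have hne : ‖e‖ = 1 := by
    rw [he_def, norm_smul, Real.norm_eq_abs, abs_of_nonneg (inv_nonneg.mpr hxn.le)]
    field_simp
  have he : ⟪e, e⟫ = 1 := by
    rw [real_inner_self_eq_norm_sq, hne]; norm_num
  set a1 : ℝ := ⟪u, e⟫ with ha1
  set b1 : ℝ := ⟪v, e⟫ with hb1
  have ha1' : a1 = ⟪u, x⟫ / ‖x‖ := by
    rw [ha1, he_def, real_inner_smul_right, div_eq_inv_mul]
  have hb1' : b1 = ⟪v, x⟫ / ‖x‖ := by
    rw [hb1, he_def, real_inner_smul_right, div_eq_inv_mul]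
  have hev : ⟪e, v⟫ = b1 := (real_inner_comm e v).symm
  have heu : ⟪e, u⟫ = a1 := (real_inner_comm e u).symm
  have hab : a1 * b1 ≤ 0 := by
    rw [ha1', hb1', div_mul_div_comm]
    exact div_nonpos_of_nonpos_of_nonneg hsign (by positivity)
  set u' : E d := u - a1 • e with hu'
  set v' : E d := v - b1 • e with hv'
  have h1 : ⟪u, v⟫ = a1 * b1 + ⟪u', v'⟫ := by
    simp only [hu', hv', inner_sub_left, inner_sub_right, real_inner_smul_left,
      real_inner_smul_right, he, hev, heu, ← ha1, ← hb1]
    ring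
  have h3 : ‖u'‖ ^ 2 = ‖u‖ ^ 2 - a1 ^ 2 := by
    rw [← real_inner_self_eq_norm_sq u', ← real_inner_self_eq_norm_sq u]
    simp only [hu', inner_sub_left, inner_sub_right, real_inner_smul_left,
      real_inner_smul_right, he, hev, heu, ← ha1]
    ring
  have h4 : ‖v'‖ ≤ ‖v‖ := by
    have h : ‖v'‖ ^ 2 ≤ ‖v‖ ^ 2 := by
      rw [← real_inner_self_eq_norm_sq v', ← real_inner_self_eq_norm_sq v]
      simp only [hv', inner_sub_left, inner_sub_right, real_inner_smul_left,
        real_inner_smul_right, he, hev, ← hb1]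
      nlinarith [sq_nonneg b1]
    nlinarith [norm_nonneg v', norm_nonneg v]
  have h5 : ⟪u, v⟫ ≤ ‖u'‖ * ‖v‖ := by
    nlinarith [real_inner_le_norm u' v', mul_le_mul_of_nonneg_left h4 (norm_nonneg u')]
  rcases eq_or_ne v 0 with rfl | hv
  · simp [Real.sqrt_nonneg]
  have hvn : (0:ℝ) < ‖v‖ := norm_pos_iff.mpr hv
  have hu2 : (‖u‖:ℝ) ^ 2 ≠ 0 := by positivity
  have hx2 : (‖x‖:ℝ) ≠ 0 := hxn.ne'
  have harg : 1 - (|⟪u, x⟫| / (‖u‖ * ‖x‖)) ^ 2 = (‖u‖ ^ 2 - a1 ^ 2) / ‖u‖ ^ 2 := by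
    rw [ha1', div_pow, div_pow, sq_abs, mul_pow]
    field_simp
  have hnum : (0:ℝ) ≤ ‖u‖ ^ 2 - a1 ^ 2 := h3 ▸ sq_nonneg ‖u'‖
  rw [harg, Real.sqrt_div hnum, ← h3, Real.sqrt_sq (norm_nonneg u'),
    Real.sqrt_sq (norm_nonneg u)]
  rw [div_le_div_iff₀ (by positivity) hun]
  nlinarith [mul_le_mul_of_nonneg_right h5 hun.le]

lemma abar_le_pi_div_two {d : ℕ} (u v : E d) : abar u v ≤ π / 2 := by
  rw [abar, ← Real.arccos_zero]
  exact arccos_anti (by positivity)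

lemma abar_ge {d : ℕ} (u v x : E d) (hu : u ≠ 0) (huv : 0 ≤ ⟪u, v⟫)
    (hdis : (0 ≤ ⟪u, x⟫) ≠ (0 ≤ ⟪v, x⟫)) : π / 2 - abar u v ≤ abar u x := by
  rcases eq_or_ne v 0 with rfl | hv
  · rw [abar, inner_zero_right, norm_zero, mul_zero, div_zero, Real.arccos_zero,
      abar]
    linarith [Real.arccos_nonneg (|⟪u, x⟫| / (‖u‖ * ‖x‖))]
  rcases eq_or_ne x 0 with rfl | hx
  · exact (hdis (by rw [inner_zero_right, inner_zero_right])).elim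
  have hsign : ⟪u, x⟫ * ⟪v, x⟫ ≤ 0 := by
    by_cases h1 : 0 ≤ ⟪u, x⟫
    · have h2 : ¬ 0 ≤ ⟪v, x⟫ := fun h2 =>
        hdis (by simp only [eq_iff_iff]; exact ⟨fun _ => h2, fun _ => h1⟩)
      exact mul_nonpos_of_nonneg_of_nonpos h1 (le_of_not_ge h2)
    · have h2 : 0 ≤ ⟪v, x⟫ := by
        by_contra h2
        have : (0 ≤ ⟪u, x⟫) = (0 ≤ ⟪v, x⟫) := by
          simp only [eq_iff_iff]
          exact ⟨fun h => absurd h h1, fun h => absurd h h2⟩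
        exact hdis this
      exact mul_nonpos_of_nonpos_of_nonneg (le_of_not_ge h1) h2
  set t : ℝ := |⟪u, x⟫| / (‖u‖ * ‖x‖) with ht
  set c : ℝ := ⟪u, v⟫ / (‖u‖ * ‖v‖) with hc
  have ht0 : 0 ≤ t := by positivity
  have habs : abar u v = Real.arccos c := by rw [abar, abs_of_nonneg huv]
  rw [habs, abar, ← ht]
  have h1 : π / 2 - Real.arccos c = Real.arcsin c := by
    rw [Real.arccos]; ring
  rw [h1]
  have h2 : Real.arcsin c ≤ Real.arcsin (Real.sqrt (1 - t ^ 2)) :=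
    Real.monotone_arcsin (key_ineq u v x hu hx hsign)
  refine h2.trans_eq ?_
  rw [← Real.sin_arccos, Real.arcsin_sin]
  · linarith [Real.arccos_nonneg t, Real.pi_pos]
  · rw [← Real.arccos_zero]
    exact arccos_anti ht0

lemma inner_eq_dot {d : ℕ} (a b : E d) : ⟪a, b⟫ = (fun i => a i) ⬝ᵥ (fun i => b i) := by
  simp [PiLp.inner_apply, dotProduct, RCLike.inner_apply, mul_comm]

lemma whatX_eq : whatX wstar x = toE (Mproj x *ᵥ fun k => wstar k) := rfl

lemma Mproj_transpose : (Mproj x)ᵀ = Mproj x := by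
  rw [Mproj, transpose_mul, transpose_mul, transpose_transpose,
    transpose_nonsing_inv, transpose_mul, transpose_transpose, Matrix.mul_assoc]

lemma Mproj_mul_Xmat (h : IsUnit ((Xmat x)ᵀ * Xmat x).det) :
    Mproj x * Xmat x = Xmat x := by
  simp only [Mproj, Matrix.mul_assoc]
  rw [Matrix.nonsing_inv_mul _ h, Matrix.mul_one]

lemma Mproj_idem (h : IsUnit ((Xmat x)ᵀ * Xmat x).det) :
    Mproj x * Mproj x = Mproj x := by
  calc Mproj x * Mproj x
      = (Mproj x * Xmat x) * (((Xmat x)ᵀ * Xmat x)⁻¹ * (Xmat x)ᵀ) := by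
        simp only [Mproj, Matrix.mul_assoc]
    _ = Mproj x := by rw [Mproj_mul_Xmat x h, Mproj, Matrix.mul_assoc]

lemma inner_wstar_whatX : ⟪wstar, whatX wstar x⟫ = ⟪whatX wstar x, whatX wstar x⟫ := by
  by_cases h : IsUnit ((Xmat x)ᵀ * Xmat x).det
  · rw [whatX_eq, inner_eq_dot, inner_eq_dot]
    show (fun k => wstar k) ⬝ᵥ (Mproj x *ᵥ fun k => wstar k)
        = (Mproj x *ᵥ fun k => wstar k) ⬝ᵥ (Mproj x *ᵥ fun k => wstar k)
    rw [dotProduct_mulVec ((Mproj x) *ᵥ fun k => wstar k),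
      ← Matrix.mulVec_transpose, Matrix.mulVec_mulVec, Mproj_transpose,
      Mproj_idem x h, dotProduct_comm]
  · rw [whatX_eq, Mproj, Matrix.nonsing_inv_apply_not_isUnit _ h]
    simp [toE, Matrix.mul_zero, Matrix.zero_mul]

lemma mulVec_col (h : IsUnit ((Xmat x)ᵀ * Xmat x).det) (i : Fin n) :
    Mproj x *ᵥ (fun k => x i k) = fun k => x i k := by
  funext k
  have hc := congrFun (congrFun (Mproj_mul_Xmat x h) k) i
  simpa [Matrix.mul_apply, Matrix.mulVec, dotProduct, Xmat] using hc

lemma inner_whatX_col (h : IsUnit ((Xmat x)ᵀ * Xmat x).det) (i : Fin n) :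
    ⟪whatX wstar x, x i⟫ = ⟪wstar, x i⟫ := by
  rw [real_inner_comm, ← real_inner_comm wstar]
  rw [whatX_eq, inner_eq_dot, inner_eq_dot]
  show (fun k => x i k) ⬝ᵥ (Mproj x *ᵥ fun k => wstar k)
      = (fun k => x i k) ⬝ᵥ (fun k => wstar k)
  rw [dotProduct_mulVec, ← Matrix.mulVec_transpose, Mproj_transpose,
    mulVec_col x h i]

lemma abar_what_le (hws : wstar ≠ 0) (h : IsUnit ((Xmat x)ᵀ * Xmat x).det) (i : Fin n) :
    abar wstar (whatX wstar x) ≤ abar wstar (x i) := by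
  set w' := whatX wstar x with hw'
  have hproj : ⟪wstar, w'⟫ = ‖w'‖ ^ 2 := by
    rw [hw', inner_wstar_whatX, real_inner_self_eq_norm_sq]
  have hcol : ⟪w', x i⟫ = ⟪wstar, x i⟫ := inner_whatX_col wstar x h i
  rcases eq_or_ne w' 0 with h0 | h0
  · have hz : ⟪wstar, x i⟫ = 0 := by rw [← hcol, h0, inner_zero_left]
    rw [abar, abar, h0, hz]
    simp [inner_zero_right]
  · apply arccos_anti
    have hw'n : 0 < ‖w'‖ := norm_pos_iff.mpr h0
    have hwn : 0 < ‖wstar‖ := norm_pos_iff.mpr hws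
    have hr : |⟪wstar, w'⟫| / (‖wstar‖ * ‖w'‖) = ‖w'‖ / ‖wstar‖ := by
      rw [hproj, abs_of_nonneg (sq_nonneg _)]
      field_simp
    rw [hr]
    rcases eq_or_ne (x i) 0 with hxi | hxi
    · rw [hxi, inner_zero_right]
      simp
      positivity
    · have hxn : 0 < ‖x i‖ := norm_pos_iff.mpr hxi
      rw [div_le_div_iff₀ (by positivity) hwn]
      have hb : |⟪wstar, x i⟫| ≤ ‖w'‖ * ‖x i‖ := by
        rw [← hcol]; exact abs_real_inner_le_norm w' (x i)
      nlinarith [mul_le_mul_of_nonneg_right hb hwn.le]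

lemma sum_smul_apply {d m : ℕ} (c : Fin m → ℝ) (x : Fin m → E d) (k : Fin d) :
    (∑ i, c i • x i) k = (Xmat x *ᵥ c) k := by
  simp only [Matrix.mulVec, dotProduct, Xmat, Matrix.of_apply]
  rw [show (∑ i, c i • x i) k = ∑ i, (c i • x i) k by rw [WithLp.ofLp_sum, Finset.sum_apply]]
  simp [mul_comm]

lemma mulVec_eq_zero_iff_sum {d m : ℕ} (c : Fin m → ℝ) (x : Fin m → E d) :
    Xmat x *ᵥ c = 0 ↔ ∑ i, c i • x i = 0 := by
  have hsum : (∑ i, c i • x i) = toE (Xmat x *ᵥ c) := PiLp.ext (sum_smul_apply c x)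
  rw [hsum]
  exact (WithLp.toLp_eq_zero 2).symm

lemma lindep_iff_det {d m : ℕ} (x : Fin m → E d) :
    ¬ LinearIndependent ℝ x ↔ ((Xmat x)ᵀ * Xmat x).det = 0 := by
  rw [← Matrix.exists_mulVec_eq_zero_iff]
  have hk : ∀ c : Fin m → ℝ, ((Xmat x)ᵀ * Xmat x) *ᵥ c = 0 ↔ Xmat x *ᵥ c = 0 := by
    intro c
    have := Matrix.ker_mulVecLin_transpose_mul_self (Xmat x)
    constructor <;> intro h
    · have hc : c ∈ LinearMap.ker ((Xmat x)ᵀ * Xmat x).mulVecLin := by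
        rw [LinearMap.mem_ker, Matrix.mulVecLin_apply]; exact h
      rw [this, LinearMap.mem_ker, Matrix.mulVecLin_apply] at hc
      exact hc
    · have hc : c ∈ LinearMap.ker (Xmat x).mulVecLin := by
        rw [LinearMap.mem_ker, Matrix.mulVecLin_apply]; exact h
      rw [← this, LinearMap.mem_ker, Matrix.mulVecLin_apply] at hc
      exact hc
  constructor
  · intro h
    obtain ⟨g, hg0, i, hgi⟩ := Fintype.not_linearIndependent_iff.mp h
    refine ⟨g, ?_, (hk g).mpr ((mulVec_eq_zero_iff_sum g x).mpr hg0)⟩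
    exact fun hgz => hgi (by rw [hgz]; rfl)
  · rintro ⟨v, hv0, hv⟩
    apply Fintype.not_linearIndependent_iff.mpr
    refine ⟨v, (mulVec_eq_zero_iff_sum v x).mp ((hk v).mp hv), ?_⟩
    by_contra hc
    push_neg at hc
    exact hv0 (funext fun i => hc i)

lemma continuous_detGram {d m : ℕ} :
    Continuous fun x : Fin m → E d => ((Xmat x)ᵀ * Xmat x).det := by
  have hX : Continuous fun x : Fin m → E d => Xmat x := by
    apply continuous_pi; intro k; apply continuous_pi; intro i
    exact (continuous_apply k).comp ((PiLp.continuous_ofLp ..).comp (continuous_apply i))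
  exact Continuous.matrix_det ((hX.matrix_transpose).matrix_mul hX)

lemma pi_dep_null {d : ℕ} (μ : Measure (E d)) [IsProbabilityMeasure μ] (hac : μ ≪ volume) :
    ∀ m : ℕ, m ≤ d →
      (Measure.pi fun _ : Fin m => μ) {x | ¬ LinearIndependent ℝ x} = 0 := by
  intro m
  induction m with
  | zero =>
    intro _
    have : {x : Fin 0 → E d | ¬ LinearIndependent ℝ x} = ∅ := by
      ext x
      simp [linearIndependent_empty_type]
    rw [this, measure_empty]
  | succ m ih =>
    intro hmd
    have hmd' : m ≤ d := Nat.le_of_succ_le hmd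
    have hmlt : m < d := Nat.lt_of_succ_le hmd
    set D : Set (Fin (m + 1) → E d) := {x | ¬ LinearIndependent ℝ x} with hDdef
    have hDmeas : MeasurableSet D := by
      have hDeq : D = (fun x : Fin (m + 1) → E d => ((Xmat x)ᵀ * Xmat x).det) ⁻¹' {0} := by
        ext x
        simp [hDdef, lindep_iff_det]
      rw [hDeq]
      exact continuous_detGram.measurable (measurableSet_singleton 0)
    have hmp := measurePreserving_piFinSuccAbove (fun _ : Fin (m + 1) => μ) (Fin.last m)
    set e := MeasurableEquiv.piFinSuccAbove (fun _ : Fin (m + 1) => E d) (Fin.last m) with he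
    have h1 : (μ.prod (Measure.pi fun _ : Fin m => μ)) (e.symm ⁻¹' D)
        = (Measure.pi fun _ : Fin (m + 1) => μ) D :=
      MeasurePreserving.measure_preimage_equiv hmp.symm D
    rw [← h1]
    have hS : MeasurableSet (e.symm ⁻¹' D) := e.symm.measurable hDmeas
    rw [Measure.prod_apply_symm hS]
    have hae : ∀ᵐ z ∂(Measure.pi fun _ : Fin m => μ), LinearIndependent ℝ z := by
      rw [ae_iff]
      exact ih hmd'
    refine (lintegral_congr_ae ?_).trans lintegral_zero
    filter_upwards [hae] with z hz
    have hsec : ((fun y : E d => (y, z)) ⁻¹' (e.symm ⁻¹' D))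
        ⊆ (Submodule.span ℝ (Set.range z) : Set (E d)) := by
      intro y hy
      have hyD : ¬ LinearIndependent ℝ (e.symm (y, z)) := hy
      have hins : e.symm (y, z) = Fin.snoc z y := by
        rw [he]
        simp [MeasurableEquiv.piFinSuccAbove_symm_apply, Fin.insertNthEquiv,
          Fin.insertNth_last']
      rw [hins] at hyD
      by_contra hys
      exact hyD (linearIndependent_fin_snoc.mpr ⟨hz, hys⟩)
    refine measure_mono_null hsec (hac ?_)
    apply Measure.addHaar_submodule
    intro htop
    have h2 := finrank_range_le_card (R := ℝ) z
    rw [Set.finrank] at h2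
    rw [htop, finrank_top] at h2
    rw [finrank_euclideanSpace_fin, Fintype.card_fin] at h2
    omega

end aux

set_option maxHeartbeats 1000000 in
theorem transfer_risk_bound {d n : ℕ} (hn : 0 < n) (hnd : n < d)
    (μ : Measure (E d)) [IsProbabilityMeasure μ] (hac : μ ≪ volume)
    (wstar : E d) (hws : wstar ≠ 0)
    (β : ℝ) (hβ : β ∈ Set.Icc 0 (π / 2)) :
    ∫ X : Fin n → E d, risk μ wstar (whatX wstar X) ∂(Measure.pi fun _ => μ)
      ≤ pfun μ wstar β + pfun μ wstar (π / 2 - β) ^ n := by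

  classical
  set ν := (Measure.pi fun _ : Fin n => μ) with hν
  set A : Set (E d) := {y | π / 2 - β ≤ abar wstar y} with hA
  have hAmeas : MeasurableSet A := by
    have hcont : Measurable fun y : E d => abar wstar y := by
      apply Real.continuous_arccos.measurable.comp
      apply Measurable.div
      · exact (continuous_abs.comp
          (Continuous.inner continuous_const continuous_id)).measurable
      · exact (continuous_const.mul continuous_norm).measurable
    exact measurableSet_le measurable_const hcont
  set B : Set (Fin n → E d) := Set.pi Set.univ (fun _ => A) with hB
  have hBmeas : MeasurableSet B := MeasurableSet.univ_pi fun _ => hAmeas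
  have hνB : ν B = (μ A) ^ n := by
    rw [hB, hν, Measure.pi_pi]
    simp
  have hdep : ν {X : Fin n → E d | ((Xmat X)ᵀ * Xmat X).det = 0} = 0 := by
    have h1 : {X : Fin n → E d | ((Xmat X)ᵀ * Xmat X).det = 0}
        = {X | ¬ LinearIndependent ℝ X} := by
      ext X
      simp only [Set.mem_setOf_eq]
      exact (lindep_iff_det X).symm
    rw [h1]
    exact pi_dep_null μ hac n hnd.le
  have hae : ∀ᵐ X ∂ν, ((Xmat X)ᵀ * Xmat X).det ≠ 0 := by
    rw [ae_iff]
    simpa using hdep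
  have hBint : Integrable (B.indicator fun _ => (1:ℝ)) ν := by
    rw [integrable_indicator_iff hBmeas]
    exact integrableOn_const (measure_lt_top ν B).ne
  have hpt : ∀ᵐ X ∂ν, risk μ wstar (whatX wstar X)
      ≤ pfun μ wstar β + B.indicator (fun _ => (1:ℝ)) X := by
    filter_upwards [hae] with X hdet
    by_cases hXB : X ∈ B
    · rw [Set.indicator_of_mem hXB]
      have h1 : risk μ wstar (whatX wstar X) ≤ 1 := by
        rw [risk]
        calc (μ _).toReal ≤ (μ Set.univ).toReal :=
              ENNReal.toReal_mono (measure_ne_top μ _) (measure_mono (Set.subset_univ _))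
          _ = 1 := by simp
      have h2 : (0:ℝ) ≤ pfun μ wstar β := ENNReal.toReal_nonneg
      linarith
    · rw [Set.indicator_of_notMem hXB, add_zero]
      obtain ⟨i, hi⟩ : ∃ i, ¬ (π / 2 - β ≤ abar wstar (X i)) := by
        by_contra hcon
        push_neg at hcon
        exact hXB (fun i _ => hcon i)
      push_neg at hi
      have hwle : abar wstar (whatX wstar X) < π / 2 - β :=
        lt_of_le_of_lt (abar_what_le wstar X hws (isUnit_iff_ne_zero.mpr hdet) i) hi
      have hsub : {x : E d | (0 ≤ ⟪wstar, x⟫) ≠ (0 ≤ ⟪whatX wstar X, x⟫)}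
          ⊆ {x : E d | β ≤ abar wstar x} := by
        intro y hy
        have h0 : 0 ≤ ⟪wstar, whatX wstar X⟫ := by
          rw [inner_wstar_whatX]
          exact real_inner_self_nonneg
        have hge := abar_ge wstar (whatX wstar X) y hws h0 hy
        simp only [Set.mem_setOf_eq]
        linarith
      rw [risk, pfun]
      exact ENNReal.toReal_mono (measure_ne_top μ _) (measure_mono hsub)
  have hint : Integrable (fun X => pfun μ wstar β + B.indicator (fun _ => (1:ℝ)) X) ν :=
    (integrable_const _).add hBint
  have hmain := integral_mono_of_nonneg
    (Filter.Eventually.of_forall fun X => ENNReal.toReal_nonneg) hint hpt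
  rw [integral_add (integrable_const _) hBint, integral_const,
    integral_indicator_const _ hBmeas] at hmain
  have hfin : (ν B).toReal = pfun μ wstar (π / 2 - β) ^ n := by
    rw [hνB, ENNReal.toReal_pow]
    rfl
  simp only [measureReal_def, measure_univ, ENNReal.toReal_one, one_smul, smul_eq_mul, mul_one, one_mul] at hmain
  rw [hfin] at hmain
  exact hmain

end
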